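/- Let K be a positive integer, let π₁, …, π_K ≥ 0 with π₁ + ⋯ + π_K = 1, let ξ₁, …, ξ_K > 0 and δ₁, …, δ_K > 0, and let X be a random variable whose law has density h(x) = Σ_{k=1}^K π_k ψ(x; ξ_k, δ_k) with respect to Lebesgue measure. Let F denote the cumulative distribution function of the chi-squared distribution with one degree of freedom. Then for every t with t ≥ ξ_k for all k: P(X > t) ≤ Σ_{k=1}^K π_k (1 − F(δ_k(t−ξ_k)²/(ξ_k²t))). -/

import Mathlib

open MeasureTheory Real ProbabilityTheory

/-- The inverse Gaussian density with mean `ξ` and shape `δ`. -/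
noncomputable def invGaussPDF (ξ δ x : ℝ) : ℝ :=
  if 0 < x then
    Real.sqrt (δ / (2 * Real.pi * x ^ 3)) * Real.exp (-(δ * (x - ξ) ^ 2) / (2 * ξ ^ 2 * x))
  else 0

/-- CDF of the gamma distribution (removed from Mathlib; restored with its old definition). -/
noncomputable def ProbabilityTheory.gammaCDFReal (a r : ℝ) : StieltjesFunction ℝ :=
  cdf (gammaMeasure a r)

open Set in
lemma invGaussPDF_nonneg (ξ δ x : ℝ) : 0 ≤ invGaussPDF ξ δ x := by
  unfold invGaussPDF; split_ifs <;> positivity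

lemma measurable_invGaussPDF (ξ δ : ℝ) : Measurable (invGaussPDF ξ δ) := by
  unfold invGaussPDF
  exact Measurable.ite measurableSet_Ioi (by fun_prop) measurable_const

open Set in
lemma lintegral_image_eq_lintegral_abs_deriv_mul {s : Set ℝ} {f f' : ℝ → ℝ}
    (hs : MeasurableSet s) (hf' : ∀ x ∈ s, HasDerivWithinAt f (f' x) s x)
    (hf : Set.InjOn f s) (g : ℝ → ENNReal) :
    ∫⁻ x in f '' s, g x = ∫⁻ x in s, ENNReal.ofReal |f' x| * g (f x) := by
  simpa only [ContinuousLinearMap.det_toSpanSingleton] using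
    MeasureTheory.lintegral_image_eq_lintegral_abs_det_fderiv_mul volume hs
      (fun x hx => (hf' x hx).hasFDerivWithinAt) hf g

open Set in
lemma invGauss_tail_le {ξ δ t : ℝ} (hξ : 0 < ξ) (hδ : 0 < δ) (htξ : ξ ≤ t) :
    ∫⁻ x in Ioi t, ENNReal.ofReal (invGaussPDF ξ δ x) ≤
      gammaMeasure (1/2) (1/2) (Ioi (δ * (t - ξ) ^ 2 / (ξ ^ 2 * t))) := by
  have ht0 : 0 < t := lt_of_lt_of_le hξ htξ
  set g : ℝ → ℝ := fun x => δ * (x - ξ) ^ 2 / (ξ ^ 2 * x) with hgdef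
  set g' : ℝ → ℝ := fun x => δ * (x ^ 2 - ξ ^ 2) / (ξ ^ 2 * x ^ 2) with hg'def
  have hgt : δ * (t - ξ) ^ 2 / (ξ ^ 2 * t) = g t := rfl
  rw [hgt]
  have hderiv : ∀ x ∈ Ioi t, HasDerivWithinAt g (g' x) (Ioi t) x := by
    intro x hx
    have hx0 : 0 < x := ht0.trans hx
    have h1 : HasDerivAt (fun y => δ * (y - ξ) ^ 2) (δ * (2 * (x - ξ))) x := by
      simpa using (((hasDerivAt_id x).sub_const ξ).pow 2).const_mul δ
    have h2 : HasDerivAt (fun y => ξ ^ 2 * y) (ξ ^ 2) x := by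
      simpa using (hasDerivAt_id x).const_mul (ξ ^ 2)
    have h3 := h1.div h2 (by positivity)
    have heq : (δ * (2 * (x - ξ)) * (ξ ^ 2 * x) - δ * (x - ξ) ^ 2 * ξ ^ 2) / (ξ ^ 2 * x) ^ 2
        = g' x := by
      simp only [hg'def]
      field_simp
      ring
    rw [heq] at h3
    exact h3.hasDerivWithinAt
  have hmono : StrictMonoOn g (Ici t) := by
    intro a ha b hb hab
    have ha0 : 0 < a := lt_of_lt_of_le ht0 ha
    have hb0 : 0 < b := lt_of_lt_of_le ht0 hb
    have haξ : ξ ≤ a := htξ.trans ha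
    simp only [hgdef]
    rw [div_lt_div_iff₀ (by positivity) (by positivity)]
    have h5 : 0 < (b - a) * (a * b - ξ ^ 2) :=
      mul_pos (sub_pos.2 hab) (by nlinarith)
    nlinarith [mul_pos (mul_pos hδ (mul_pos hξ hξ)) h5]
  have hinj : Set.InjOn g (Ioi t) := hmono.injOn.mono Ioi_subset_Ici_self
  have himg : g '' Ioi t ⊆ Ioi (g t) := by
    rintro y ⟨x, hx, rfl⟩
    exact hmono self_mem_Ici (Ioi_subset_Ici_self hx) hx
  have hpoint : ∀ x ∈ Ioi t, ENNReal.ofReal (invGaussPDF ξ δ x) ≤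
      ENNReal.ofReal |g' x| * gammaPDF (1/2) (1/2) (g x) := by
    intro x hx
    have hx0 : 0 < x := ht0.trans hx
    have hxξ : ξ < x := lt_of_le_of_lt htξ hx
    have hxsub : 0 < x - ξ := sub_pos.2 hxξ
    have hu : 0 < g x := by
      simp only [hgdef]
      positivity
    have hg'pos : 0 < g' x := by
      simp only [hg'def]
      have : 0 < x ^ 2 - ξ ^ 2 := by nlinarith
      positivity
    rw [gammaPDF_of_nonneg hu.le, ← ENNReal.ofReal_mul (abs_nonneg _)]
    apply ENNReal.ofReal_le_ofReal
    rw [abs_of_pos hg'pos]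
    unfold invGaussPDF
    rw [if_pos hx0]
    have hexp : -(δ * (x - ξ) ^ 2) / (2 * ξ ^ 2 * x) = -((1:ℝ)/2 * g x) := by
      simp only [hgdef]
      field_simp
    rw [hexp]
    have key : Real.sqrt (δ / (2 * Real.pi * x ^ 3)) ≤
        g' x * (((1:ℝ)/2) ^ ((1:ℝ)/2) / Real.Gamma (1/2) * (g x) ^ ((1:ℝ)/2 - 1)) := by
      have hc : ((1:ℝ)/2) ^ ((1:ℝ)/2) / Real.Gamma (1/2) = (Real.sqrt (2 * Real.pi))⁻¹ := by
        rw [Real.Gamma_one_half_eq, ← Real.sqrt_eq_rpow]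
        rw [div_eq_mul_inv, ← Real.sqrt_inv, ← Real.sqrt_mul (by positivity)]
        norm_num
        ring
      have hp : (g x) ^ ((1:ℝ)/2 - 1) = (Real.sqrt (g x))⁻¹ := by
        rw [show (1:ℝ)/2 - 1 = -(1/2) by norm_num, Real.rpow_neg hu.le, ← Real.sqrt_eq_rpow]
      rw [hc, hp, ← mul_inv, ← Real.sqrt_mul (by positivity)]
      have hrhs : g' x * (Real.sqrt (2 * Real.pi * g x))⁻¹
          = Real.sqrt ((g' x) ^ 2 / (2 * Real.pi * g x)) := by
        rw [Real.sqrt_div (sq_nonneg _), Real.sqrt_sq hg'pos.le, div_eq_mul_inv]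
      rw [hrhs]
      apply Real.sqrt_le_sqrt
      have hgsq : (g' x) ^ 2 / (2 * Real.pi * g x)
          = δ * (x + ξ) ^ 2 / (2 * Real.pi * ξ ^ 2 * x ^ 3) := by
        simp only [hgdef, hg'def]
        field_simp
        ring
      rw [hgsq, div_le_div_iff₀ (by positivity) (by positivity)]
      have h1 : ξ ^ 2 ≤ (x + ξ) ^ 2 := by nlinarith
      nlinarith [mul_pos (mul_pos (mul_pos two_pos Real.pi_pos) (pow_pos hx0 3)) hδ,
        mul_nonneg (mul_nonneg (mul_nonneg (by positivity : (0:ℝ) ≤ 2 * Real.pi)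
          (pow_pos hx0 3).le) hδ.le) (sub_nonneg.2 h1)]
    calc Real.sqrt (δ / (2 * Real.pi * x ^ 3)) * Real.exp (-((1:ℝ)/2 * g x))
        ≤ (g' x * (((1:ℝ)/2) ^ ((1:ℝ)/2) / Real.Gamma (1/2) * (g x) ^ ((1:ℝ)/2 - 1))) *
            Real.exp (-((1:ℝ)/2 * g x)) :=
          mul_le_mul_of_nonneg_right key (Real.exp_nonneg _)
      _ = g' x * (((1:ℝ)/2) ^ ((1:ℝ)/2) / Real.Gamma (1/2) * (g x) ^ ((1:ℝ)/2 - 1) *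
            Real.exp (-((1:ℝ)/2 * g x))) := by ring
  calc ∫⁻ x in Ioi t, ENNReal.ofReal (invGaussPDF ξ δ x)
      ≤ ∫⁻ x in Ioi t, ENNReal.ofReal |g' x| * gammaPDF (1/2) (1/2) (g x) :=
        setLIntegral_mono' measurableSet_Ioi hpoint
    _ = ∫⁻ x in g '' Ioi t, gammaPDF (1/2) (1/2) x :=
        (_root_.lintegral_image_eq_lintegral_abs_deriv_mul measurableSet_Ioi hderiv hinj _).symm
    _ ≤ ∫⁻ x in Ioi (g t), gammaPDF (1/2) (1/2) x := lintegral_mono_set himg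
    _ = gammaMeasure (1/2) (1/2) (Ioi (g t)) :=
        (withDensity_apply _ measurableSet_Ioi).symm

theorem invGauss_mixture_dmp_bound (K : ℕ) (hK : 0 < K)
    (w : Fin K → ℝ) (hw : ∀ k, 0 ≤ w k) (hwsum : ∑ k, w k = 1)
    (ξ δ : Fin K → ℝ) (hξ : ∀ k, 0 < ξ k) (hδ : ∀ k, 0 < δ k)
    {Ω : Type*} [MeasurableSpace Ω] (μ : Measure Ω) [IsProbabilityMeasure μ]
    (X : Ω → ℝ) (hX : Measurable X)
    (hlaw : Measure.map X μ =
      volume.withDensity (fun x => ENNReal.ofReal (∑ k, w k * invGaussPDF (ξ k) (δ k) x)))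
    (t : ℝ) (ht : ∀ k, ξ k ≤ t) :
    (μ {ω | t < X ω}).toReal ≤
      ∑ k, w k *
        (1 - gammaCDFReal (1 / 2) (1 / 2) (δ k * (t - ξ k) ^ 2 / ((ξ k) ^ 2 * t))) := by
  classical
  have hprob : IsProbabilityMeasure (gammaMeasure (1/2) (1/2)) :=
    isProbabilityMeasure_gammaMeasure (by norm_num) (by norm_num)
  set lam : Fin K → ℝ := fun k => δ k * (t - ξ k) ^ 2 / ((ξ k) ^ 2 * t) with hlam
  have h1 : μ {ω | t < X ω}
      = ∫⁻ x in Set.Ioi t, ENNReal.ofReal (∑ k, w k * invGaussPDF (ξ k) (δ k) x) := by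
    have : {ω | t < X ω} = X ⁻¹' (Set.Ioi t) := rfl
    rw [this, ← Measure.map_apply hX measurableSet_Ioi, hlaw,
      withDensity_apply _ measurableSet_Ioi]
  have h3 : μ {ω | t < X ω}
      ≤ ∑ k, ENNReal.ofReal (w k) * gammaMeasure (1/2) (1/2) (Set.Ioi (lam k)) := by
    rw [h1]
    have h2 : ∀ x ∈ Set.Ioi t, ENNReal.ofReal (∑ k, w k * invGaussPDF (ξ k) (δ k) x)
        = ∑ k, ENNReal.ofReal (w k * invGaussPDF (ξ k) (δ k) x) := fun x _ =>
      ENNReal.ofReal_sum_of_nonneg (fun k _ => mul_nonneg (hw k) (invGaussPDF_nonneg _ _ _))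
    rw [setLIntegral_congr_fun measurableSet_Ioi h2]
    rw [lintegral_finset_sum _ (fun k _ =>
      ((measurable_invGaussPDF (ξ k) (δ k)).const_mul (w k)).ennreal_ofReal)]
    apply Finset.sum_le_sum
    intro k _
    calc ∫⁻ x in Set.Ioi t, ENNReal.ofReal (w k * invGaussPDF (ξ k) (δ k) x)
        = ENNReal.ofReal (w k) * ∫⁻ x in Set.Ioi t, ENNReal.ofReal (invGaussPDF (ξ k) (δ k) x) := by
          simp_rw [ENNReal.ofReal_mul (hw k)]
          rw [lintegral_const_mul _ (measurable_invGaussPDF (ξ k) (δ k)).ennreal_ofReal]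
      _ ≤ ENNReal.ofReal (w k) * gammaMeasure (1/2) (1/2) (Set.Ioi (lam k)) :=
          mul_le_mul_right (invGauss_tail_le (hξ k) (hδ k) (ht k)) _
  have h4 : ∀ k, (gammaMeasure (1/2) (1/2) (Set.Ioi (lam k))).toReal
      = 1 - gammaCDFReal (1/2) (1/2) (lam k) := by
    intro k
    rw [show Set.Ioi (lam k) = (Set.Iic (lam k))ᶜ from Set.compl_Iic.symm,
      measure_compl measurableSet_Iic (measure_ne_top _ _), measure_univ,
      ENNReal.toReal_sub_of_le prob_le_one ENNReal.one_ne_top, ENNReal.toReal_one,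
      gammaCDFReal, cdf_eq_real, measureReal_def]
  have hne : ∀ k ∈ Finset.univ,
      ENNReal.ofReal (w k) * gammaMeasure (1/2) (1/2) (Set.Ioi (lam k)) ≠ ⊤ :=
    fun k _ => ENNReal.mul_ne_top ENNReal.ofReal_ne_top (measure_ne_top _ _)
  calc (μ {ω | t < X ω}).toReal
      ≤ (∑ k, ENNReal.ofReal (w k) * gammaMeasure (1/2) (1/2) (Set.Ioi (lam k))).toReal :=
        ENNReal.toReal_mono (ENNReal.sum_ne_top.2 hne) h3
    _ = ∑ k, w k * (1 - gammaCDFReal (1/2) (1/2) (lam k)) := by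
        rw [ENNReal.toReal_sum hne]
        exact Finset.sum_congr rfl fun k _ => by
          rw [ENNReal.toReal_mul, ENNReal.toReal_ofReal (hw k), h4 k]
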